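/- arXiv:2510.04629 — 7 statements merged into one kernel-verified Lean document; each statement's English description precedes it below -/
import Mathlib

section
/- Let a and b be pure quaternions (Re a = 0 and Re b = 0) with ‖a‖ = ‖b‖. Then a * Im(a*b) + Im(a*b) * b = 0 if and only if a*b = b*a. -/
/-!
For pure quaternions `a`, `b` the conjugate of `a * b` is `b * a`, so `a` and `b` commute exactly
when `c = Im (a * b)` vanishes. On the other hand, multiplying `a * c + c * b` on the right by `b`
and taking real parts gives `‖c‖²`: by cyclicity of `Re`, `Re (a * c * b) = Re (c * (b * a))` with
`b * a = Re (a * b) - c`, while `c * b * b = -‖b‖² c` has real part `0`. Hence `a * c + c * b = 0`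
forces `c = 0`.
-/

open Quaternion

namespace Quaternion

variable {R : Type*} [CommRing R]

theorem re_mul_comm (a b : ℍ[R]) : (a * b).re = (b * a).re := by
  simp only [re_mul]
  ring

theorem re_mul_coe (a : ℍ[R]) (r : R) : (a * r).re = a.re * r := by
  rw [mul_coe_eq_smul, re_smul, smul_eq_mul, mul_comm]

theorem star_eq_re_sub_im (a : ℍ[R]) : star a = a.re - a.im := by
  ext <;> simp

theorem star_eq_neg_of_re_eq_zero {a : ℍ[R]} (ha : a.re = 0) : star a = -a := by
  rw [star_eq_two_re_sub, ha, mul_zero, coe_zero, zero_sub]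

theorem mul_self_eq_neg_normSq_of_re_eq_zero {a : ℍ[R]} (ha : a.re = 0) :
    a * a = -normSq a := by
  rw [← self_mul_star, star_eq_neg_of_re_eq_zero ha, mul_neg, neg_neg]

variable {a b : ℍ[R]}

theorem star_mul_of_re_eq_zero (ha : a.re = 0) (hb : b.re = 0) : star (a * b) = b * a := by
  rw [star_mul, star_eq_neg_of_re_eq_zero ha, star_eq_neg_of_re_eq_zero hb, neg_mul_neg]

theorem mul_comm_iff_im_mul_eq_zero [NoZeroDivisors R] [CharZero R] (ha : a.re = 0)
    (hb : b.re = 0) : a * b = b * a ↔ (a * b).im = 0 := by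
  rw [← star_mul_of_re_eq_zero ha hb, eq_comm, star_eq_self, ← sub_eq_zero, sub_re_self]

theorem re_mul_im_add_im_mul_mul_eq_normSq_im (ha : a.re = 0) (hb : b.re = 0) :
    ((a * (a * b).im + (a * b).im * b) * b).re = normSq (a * b).im := by
  set c := (a * b).im
  calc ((a * c + c * b) * b).re = (c * (b * a)).re + (c * (b * b)).re := by
        rw [add_mul, re_add, mul_assoc, re_mul_comm a, mul_assoc, mul_assoc]
    _ = (c * (↑(a * b).re - c)).re + (c * ↑(-normSq b)).re := by
        rw [← star_mul_of_re_eq_zero ha hb, star_eq_re_sub_im,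
          mul_self_eq_neg_normSq_of_re_eq_zero hb, coe_neg]
    _ = normSq c := by
        rw [mul_sub, re_sub, re_mul_coe, re_mul_coe,
          mul_self_eq_neg_normSq_of_re_eq_zero (re_im _)]
        simp [c]

end Quaternion

theorem sum_of_quaternion_cross_products_eq_zero_iff_general (a b : ℍ[ℝ])
    (ha : a.re = 0) (hb : b.re = 0) :
    a * (a * b).im + (a * b).im * b = 0 ↔ a * b = b * a := by
  rw [mul_comm_iff_im_mul_eq_zero ha hb]
  constructor
  · intro h
    rw [← normSq_eq_zero, ← re_mul_im_add_im_mul_mul_eq_normSq_im ha hb, h, zero_mul, re_zero]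
  · intro h
    rw [h, mul_zero, zero_mul, add_zero]

theorem sum_of_quaternion_cross_products_eq_zero_iff (a b : ℍ[ℝ])
    (ha : a.re = 0) (hb : b.re = 0) (hnorm : ‖a‖ = ‖b‖) :
    a * (a * b).im + (a * b).im * b = 0 ↔ a * b = b * a :=
  sum_of_quaternion_cross_products_eq_zero_iff_general a b ha hb
end

section
/- Let a be a nonreal quaternion (Im a ≠ 0). Then a quaternion x satisfies x² = a if and only if x = (Real.sqrt ‖a‖ / ‖a + (‖a‖ : ℍ)‖) • (a + (‖a‖ : ℍ)) or x = −(Real.sqrt ‖a‖ / ‖a + (‖a‖ : ℍ)‖) • (a + (‖a‖ : ℍ)). -/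
/-!
Every quaternion satisfies `x ^ 2 = 2 re(x) x - ‖x‖ ^ 2`. Hence if `x ^ 2 = a` then
`a + ‖a‖ = 2 re(x) x`; when `a` is nonreal, `re x ≠ 0` (squares of purely imaginary quaternions
are real), so `x` is a real multiple of `a + ‖a‖` of norm `√‖a‖`, leaving only two candidates.
Conversely `(a + ‖a‖) ^ 2 = 2 (‖a‖ + re a) a` with `‖a‖ + re a > 0`, so both candidates are
square roots of `a`.
-/

open Quaternion

theorem eq_or_eq_neg_norm_div_norm_smul_of_eq_smul {E : Type*} [NormedAddCommGroup E]
    [NormedSpace ℝ E] {x b : E} {r : ℝ} (hx : x = r • b) :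
    x = (‖x‖ / ‖b‖) • b ∨ x = -((‖x‖ / ‖b‖) • b) := by
  subst hx
  rcases eq_or_ne b 0 with rfl | hb
  · simp
  rw [norm_smul, Real.norm_eq_abs, mul_div_cancel_right₀ _ (norm_ne_zero_iff.mpr hb), ← neg_smul]
  rcases abs_choice r with h | h <;> rw [h] <;> simp

namespace Quaternion

section CommRing

variable {R : Type*} [CommRing R]

theorem sq_eq_two_re_smul_sub_normSq (a : ℍ[R]) :
    a ^ 2 = (2 * a.re) • a - ((normSq a : R) : ℍ[R]) := by
  rw [← self_mul_star, ← mul_coe_eq_smul, ← self_add_star', sq, mul_add, add_sub_cancel_right]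

theorem normSq_add_coe_of_normSq_eq {a : ℍ[R]} {r : R} (h : normSq a = r ^ 2) :
    normSq (a + (r : ℍ[R])) = 2 * r * (r + a.re) := by
  rw [normSq_add, h, normSq_coe, star_coe, mul_coe_eq_smul, re_smul, smul_eq_mul]
  ring

theorem sq_add_coe_of_normSq_eq {a : ℍ[R]} {r : R} (h : normSq a = r ^ 2) :
    (a + (r : ℍ[R])) ^ 2 = (2 * (r + a.re)) • a := by
  rw [sq_eq_two_re_smul_sub_normSq, normSq_add_coe_of_normSq_eq h, re_add, re_coe, smul_add,
    ← coe_smul, smul_eq_mul, add_comm a.re r, mul_right_comm, add_sub_cancel_right]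

theorem normSq_eq_re_sq_add_normSq_im (a : ℍ[R]) : normSq a = a.re ^ 2 + normSq a.im := by
  simp only [normSq_def', re_im, imI_im, imJ_im, imK_im]
  ring

theorem im_sq_eq_zero_of_re_eq_zero {a : ℍ[R]} (h : a.re = 0) : (a ^ 2).im = 0 := by
  rw [sq_eq_two_re_smul_sub_normSq, h, mul_zero, zero_smul, zero_sub, im_neg, im_coe, neg_zero]

end CommRing

theorem abs_re_lt_norm {a : ℍ} (ha : a.im ≠ 0) : |a.re| < ‖a‖ := by
  have him : 0 < normSq a.im := lt_of_le_of_ne normSq_nonneg (normSq_ne_zero.mpr ha).symm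
  have : a.re ^ 2 < ‖a‖ ^ 2 := by
    rw [sq ‖a‖, ← normSq_eq_norm_mul_self, normSq_eq_re_sq_add_normSq_im]
    linarith
  simpa [abs_norm] using sq_lt_sq.mp this

theorem add_norm_sq_eq_two_re_smul (x : ℍ) : x ^ 2 + (‖x ^ 2‖ : ℍ) = (2 * x.re) • x := by
  rw [norm_pow, sq ‖x‖, ← normSq_eq_norm_mul_self, sq_eq_two_re_smul_sub_normSq, sub_add_cancel]

noncomputable def principalSqrt (a : ℍ) : ℍ := (√‖a‖ / ‖a + (‖a‖ : ℍ)‖) • (a + (‖a‖ : ℍ))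

theorem principalSqrt_sq {a : ℍ} (h : ‖a‖ + a.re ≠ 0) : principalSqrt a ^ 2 = a := by
  have hn : normSq a = ‖a‖ ^ 2 := by rw [sq, normSq_eq_norm_mul_self]
  have ha : ‖a‖ ≠ 0 := by
    rintro h0
    rw [norm_eq_zero.mp h0, norm_zero, re_zero, add_zero] at h
    exact h rfl
  rw [principalSqrt, smul_pow, sq_add_coe_of_normSq_eq hn, smul_smul, div_pow,
    Real.sq_sqrt (norm_nonneg a), sq ‖_‖, ← normSq_eq_norm_mul_self, normSq_add_coe_of_normSq_eq hn]
  field_simp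
  rw [one_smul]

end Quaternion

theorem quaternion_sqrt_nonreal (a : ℍ[ℝ]) (ha : a.im ≠ 0) (x : ℍ[ℝ]) :
    x ^ 2 = a ↔
      x = (Real.sqrt ‖a‖ / ‖a + (‖a‖ : ℍ[ℝ])‖) • (a + (‖a‖ : ℍ[ℝ])) ∨
      x = -((Real.sqrt ‖a‖ / ‖a + (‖a‖ : ℍ[ℝ])‖) • (a + (‖a‖ : ℍ[ℝ]))) := by
  change x ^ 2 = a ↔ x = principalSqrt a ∨ x = -principalSqrt a
  constructor
  · rintro rfl
    have hre : 2 * x.re ≠ 0 := mul_ne_zero two_ne_zero fun h ↦ ha (im_sq_eq_zero_of_re_eq_zero h)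
    have hx : x = (2 * x.re)⁻¹ • (x ^ 2 + (‖x ^ 2‖ : ℍ)) := by
      rw [add_norm_sq_eq_two_re_smul, inv_smul_smul₀ hre]
    have hnorm : ‖x‖ = √‖x ^ 2‖ := by rw [norm_pow, Real.sqrt_sq (norm_nonneg x)]
    rw [principalSqrt, ← hnorm]
    exact eq_or_eq_neg_norm_div_norm_smul_of_eq_smul hx
  · have hpos : 0 < ‖a‖ + a.re := by linarith [neg_abs_le a.re, abs_re_lt_norm ha]
    have hsq := principalSqrt_sq hpos.ne'
    rintro (rfl | rfl)
    exacts [hsq, (neg_sq _).trans hsq]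
end

section
/- Let a be a nonreal quaternion (Im a ≠ 0). Set λ₁ = Real.sqrt ‖a‖ / ‖a + (‖a‖ : ℍ)‖ and λ₀ = λ₁ * ‖a‖. Then λ₀ and λ₁ are nonzero real numbers and ((λ₀ : ℍ) + λ₁ • a)² = a; that is, the square roots of a are ±(λ₀ + λ₁·a). -/
/-! For `n = ‖a‖` the quaternion identity `a² = 2 (Re a) a - n²` gives `(n + a)² = 2 (n + Re a) a`,
while `‖a + n‖² = 2 n (n + Re a)`. Hence `n (n + a)² = ‖a + n‖² a`, and rescaling `n + a` by
`λ₁ = √n / ‖a + n‖` yields a square root of `a`, provided `a + n ≠ 0`, i.e. `a` is not a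
nonpositive real. -/

open Quaternion

namespace Quaternion

theorem smul_sq_coe_add_of_normSq_eq {R : Type*} [CommRing R] (a : ℍ[R]) (r : R)
    (h : normSq a = r ^ 2) : r • ((r : ℍ[R]) + a) ^ 2 = normSq (a + (r : ℍ[R])) • a := by
  rw [normSq_def'] at h
  ext <;> simp only [sq, normSq_def', re_mul, imI_mul, imJ_mul, imK_mul, re_add, imI_add, imJ_add,
    imK_add, re_coe, imI_coe, imJ_coe, imK_coe, re_smul, imI_smul, imJ_smul, imK_smul, smul_eq_mul]
  · linear_combination (-r - a.re) * h
  · linear_combination -a.imI * h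
  · linear_combination -a.imJ * h
  · linear_combination -a.imK * h

theorem norm_smul_sq_norm_add_self (a : ℍ[ℝ]) :
    ‖a‖ • ((‖a‖ : ℍ[ℝ]) + a) ^ 2 = ‖a + (‖a‖ : ℍ[ℝ])‖ ^ 2 • a := by
  rw [sq ‖_‖, ← normSq_eq_norm_mul_self]
  exact smul_sq_coe_add_of_normSq_eq a ‖a‖ (by rw [normSq_eq_norm_mul_self, sq])

theorem add_coe_ne_zero_of_im_ne_zero {a : ℍ[ℝ]} (ha : a.im ≠ 0) (r : ℝ) : a + (r : ℍ[ℝ]) ≠ 0 :=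
  fun h => ha (by simpa using congrArg im h)

end Quaternion

theorem quaternion_sqrt_linear_form (a : ℍ[ℝ]) (ha : a.im ≠ 0)
    (l0 l1 : ℝ)
    (hl1 : l1 = Real.sqrt ‖a‖ / ‖a + (‖a‖ : ℍ[ℝ])‖)
    (hl0 : l0 = l1 * ‖a‖) :
    l0 ≠ 0 ∧ l1 ≠ 0 ∧ ((l0 : ℍ[ℝ]) + l1 • a) ^ 2 = a := by
  have hna : 0 < ‖a‖ := norm_pos_iff.mpr fun h => ha (by simp [h])
  have hc : ‖a + (‖a‖ : ℍ[ℝ])‖ ≠ 0 := norm_ne_zero_iff.mpr (add_coe_ne_zero_of_im_ne_zero ha _)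
  have hl1ne : l1 ≠ 0 := by
    rw [hl1]
    exact div_ne_zero (Real.sqrt_ne_zero'.mpr hna) hc
  have hl1sq : l1 ^ 2 = ‖a‖ / ‖a + (‖a‖ : ℍ[ℝ])‖ ^ 2 := by
    rw [hl1, div_pow, Real.sq_sqrt (norm_nonneg a)]
  refine ⟨hl0 ▸ mul_ne_zero hl1ne hna.ne', hl1ne, ?_⟩
  calc ((l0 : ℍ[ℝ]) + l1 • a) ^ 2
      = (‖a + (‖a‖ : ℍ[ℝ])‖ ^ 2)⁻¹ • ‖a‖ • ((‖a‖ : ℍ[ℝ]) + a) ^ 2 := by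
        rw [hl0, ← smul_eq_mul, coe_smul, ← smul_add, smul_pow, hl1sq, smul_smul, div_eq_inv_mul]
    _ = a := by
        rw [norm_smul_sq_norm_add_self, smul_smul, inv_mul_cancel₀ (pow_ne_zero 2 hc), one_smul]
end

section
/- Let a and b be quaternions with ‖a‖ = ‖b‖ such that the product a*b is nonreal (Im(a*b) ≠ 0). Set λ₁ = 1 / ‖a + star b‖ and λ₀ = λ₁ * ‖a‖ * ‖b‖. Then λ₀ and λ₁ are nonzero real numbers, λ₁ = 1 / ‖b + star a‖, and ((λ₀ : ℍ) + λ₁ • (a*b))² = a*b; that is, the square roots of a*b are ±(λ₀ + λ₁·(a*b)). -/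
/-!
Put `q = a * b`. Every quaternion satisfies `q² = 2 Re q · q - ‖q‖²`, hence
`(‖q‖ + q)² = 2 (‖q‖ + Re q) q`, while `‖a‖ = ‖b‖` gives `‖a + star b‖² = 2 (‖q‖ + Re q)`.
So `l0 + l1 q = (‖q‖ + q) / ‖a + star b‖` squares to `q`. Nothing degenerates because a nonreal
`q` has `|Re q| < ‖q‖`.
-/

open Quaternion

namespace Quaternion

variable {R : Type*}

theorem sq_eq_two_re_mul_sub_normSq [CommRing R] (q : ℍ[R]) :
    q ^ 2 = ↑(2 * q.re) * q - ↑(normSq q) := by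
  rw [← star_mul_self, star_eq_two_re_sub, sub_mul, sub_sub_cancel, sq]

theorem sq_coe_add_self_of_sq_eq_normSq [CommRing R] {r : R} (q : ℍ[R]) (hr : r ^ 2 = normSq q) :
    ((r : ℍ[R]) + q) ^ 2 = (2 * (r + q.re)) • q := by
  rw [(coe_commute r q).add_sq, sq_eq_two_re_mul_sub_normSq q, ← hr, ← coe_mul_eq_smul]
  simp only [two_mul, coe_add, coe_pow, add_mul]
  abel

theorem normSq_eq_re_sq_add_normSq_im_s12 [CommRing R] (q : ℍ[R]) :
    normSq q = q.re ^ 2 + normSq q.im := by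
  simp only [normSq_def', re_im, imI_im, imJ_im, imK_im]
  ring

theorem sq_re_lt_normSq [CommRing R] [LinearOrder R] [IsStrictOrderedRing R]
    {q : ℍ[R]} (hq : q.im ≠ 0) : q.re ^ 2 < normSq q := by
  rw [normSq_eq_re_sq_add_normSq_im_s12]
  exact lt_add_of_pos_right _ (normSq_nonneg.lt_of_ne' (normSq_ne_zero.2 hq))

theorem neg_re_lt_norm {q : ℍ} (hq : q.im ≠ 0) : -q.re < ‖q‖ := by
  have h : q.re ^ 2 < ‖q‖ ^ 2 := by
    rw [sq ‖q‖, ← normSq_eq_norm_mul_self]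
    exact sq_re_lt_normSq hq
  exact neg_lt.1 (abs_lt_of_sq_lt_sq' h (norm_nonneg q)).1

theorem norm_add_star_sq (a b : ℍ) : ‖a + star b‖ ^ 2 = ‖a‖ ^ 2 + ‖b‖ ^ 2 + 2 * (a * b).re := by
  simp only [sq, ← normSq_eq_norm_mul_self, normSq_add, normSq_star, star_star]

theorem norm_add_star_comm (a b : ℍ) : ‖b + star a‖ = ‖a + star b‖ := by
  rw [← norm_star, star_add, star_star, add_comm]

end Quaternion

theorem quaternion_product_sqrt_linear_form (a b : ℍ[ℝ])
    (hnorm : ‖a‖ = ‖b‖) (hab : (a * b).im ≠ 0)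
    (l0 l1 : ℝ)
    (hl1 : l1 = 1 / ‖a + star b‖)
    (hl0 : l0 = l1 * ‖a‖ * ‖b‖) :
    l0 ≠ 0 ∧ l1 ≠ 0 ∧ l1 = 1 / ‖b + star a‖ ∧
      ((l0 : ℍ[ℝ]) + l1 • (a * b)) ^ 2 = a * b := by
  have hsum : ‖a + star b‖ ^ 2 = 2 * (‖a * b‖ + (a * b).re) := by
    rw [norm_add_star_sq, norm_mul, hnorm]
    ring
  have hl0' : l0 = l1 * ‖a * b‖ := by rw [hl0, mul_assoc, norm_mul]
  have hl1_comm : l1 = 1 / ‖b + star a‖ := by rw [hl1, norm_add_star_comm]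
  generalize a * b = q at hab hsum hl0' ⊢
  have hS : ‖a + star b‖ ^ 2 ≠ 0 := by
    rw [hsum]
    linarith [neg_re_lt_norm hab]
  have hl1' : l1 ≠ 0 := by
    rw [hl1]
    exact one_div_ne_zero (pow_ne_zero_iff two_ne_zero |>.1 hS)
  have hq0 : ‖q‖ ≠ 0 := norm_ne_zero_iff.2 fun h ↦ hab (by simp [h])
  have hlin : (l0 : ℍ) + l1 • q = l1 • ((‖q‖ : ℍ) + q) := by rw [hl0', smul_add, smul_coe]
  have hsq : ((‖q‖ : ℍ) + q) ^ 2 = (2 * (‖q‖ + q.re)) • q :=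
    sq_coe_add_self_of_sq_eq_normSq q (by rw [sq, normSq_eq_norm_mul_self])
  refine ⟨hl0' ▸ mul_ne_zero hl1' hq0, hl1', hl1_comm, ?_⟩
  rw [hlin, smul_pow, hsq, smul_smul, ← hsum, hl1, div_pow, one_pow, one_div_mul_cancel hS,
    one_smul]
end

section
/- Let a and b be nonreal quaternions with Re a = Re b and ‖a‖ = ‖b‖, and let y be a quaternion with a*y − y*b = 0. Then there exists a quaternion q such that y = (Im a) * q + q * (Im b). Hence x = (Im a)q + q(Im b), with q ranging over all quaternions, is the general solution of the homogeneous singular Sylvester equation a*x − x*b = 0. -/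
/-!
Subtracting the equal real parts turns `a y = y b` into `u y = y v` for `u = Im a`, `v = Im b`.
Pure quaternions square to minus their squared norm, and `‖Im a‖ = ‖Im b‖`, so `u² = v² = c`
with `c = -‖Im a‖² ≠ 0`. Then `q = (2c)⁻¹ u y` works: `u q + q v = (2c)⁻¹ (u² y + y v²) = y`.
-/

open Quaternion

theorem QuaternionAlgebra.im_mul_eq_mul_im_of_mul_eq_mul {R : Type*} [CommRing R] {c₁ c₂ c₃ : R}
    {a b y : ℍ[R,c₁,c₂,c₃]} (hre : a.re = b.re) (h : a * y = y * b) :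
    a.im * y = y * b.im := by
  rw [← sub_re_self, ← sub_re_self b, sub_mul, mul_sub, h, hre, coe_commutes]

theorem Quaternion.normSq_eq_re_sq_add_normSq_im_s14 {R : Type*} [CommRing R] (a : ℍ[R]) :
    normSq a = a.re ^ 2 + normSq a.im := by
  simp only [normSq_def', re_im, imI_im, imJ_im, imK_im]
  ring

theorem Quaternion.normSq_im_eq_of_re_eq_of_norm_eq {a b : ℍ[ℝ]} (hre : a.re = b.re)
    (hnorm : ‖a‖ = ‖b‖) : normSq a.im = normSq b.im := by
  have h := normSq_eq_re_sq_add_normSq_im_s14 b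
  rw [normSq_eq_norm_mul_self, ← hnorm, ← normSq_eq_norm_mul_self,
    normSq_eq_re_sq_add_normSq_im_s14, hre] at h
  exact add_left_cancel h

theorem eq_mul_smul_add_smul_mul_of_sq_eq {K A : Type*} [Field K] [Ring A] [Algebra K A]
    {u v y : A} {c : K} (hc : 2 * c ≠ 0) (hu : u ^ 2 = algebraMap K A c)
    (hv : v ^ 2 = algebraMap K A c) (h : u * y = y * v) :
    y = u * ((2 * c)⁻¹ • (u * y)) + ((2 * c)⁻¹ • (u * y)) * v := by
  have hsum : u * (u * y) + u * y * v = (2 * c) • y := by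
    rw [← mul_assoc, ← sq, hu, h, mul_assoc, ← sq, hv, ← Algebra.commutes, ← Algebra.smul_def,
      two_mul, add_smul]
  rw [mul_smul_comm, smul_mul_assoc, ← smul_add, hsum, smul_smul, inv_mul_cancel₀ hc, one_smul]

theorem homogeneous_sylvester_general_solution_general (a b : ℍ[ℝ])
    (ha : a.im ≠ 0)
    (hre : a.re = b.re) (hnorm : ‖a‖ = ‖b‖)
    (y : ℍ[ℝ]) (hy : a * y - y * b = 0) :
    ∃ q : ℍ[ℝ], y = a.im * q + q * b.im := by
  have hc : 2 * -normSq a.im ≠ 0 := mul_ne_zero two_ne_zero (neg_ne_zero.2 (normSq_ne_zero.2 ha))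
  have hsq (x : ℍ[ℝ]) : x.im ^ 2 = algebraMap ℝ ℍ[ℝ] (-normSq x.im) := by
    rw [im_sq, algebraMap_def, coe_neg]
  refine ⟨_, eq_mul_smul_add_smul_mul_of_sq_eq hc (hsq a) ?_
    (QuaternionAlgebra.im_mul_eq_mul_im_of_mul_eq_mul hre (sub_eq_zero.1 hy))⟩
  rw [hsq, normSq_im_eq_of_re_eq_of_norm_eq hre hnorm]

theorem homogeneous_sylvester_general_solution (a b : ℍ[ℝ])
    (ha : a.im ≠ 0) (hb : b.im ≠ 0)
    (hre : a.re = b.re) (hnorm : ‖a‖ = ‖b‖)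
    (y : ℍ[ℝ]) (hy : a * y - y * b = 0) :
    ∃ q : ℍ[ℝ], y = a.im * q + q * b.im :=
  homogeneous_sylvester_general_solution_general a b ha hre hnorm y hy
end

section
/- Let a be a nonreal quaternion (Im a ≠ 0). Then a quaternion x satisfies a*x = x*(star a) if and only if Re x = 0 and Re((Im a) * x) = 0; that is, the solutions are exactly the pure quaternions whose vector part is orthogonal to Im a. -/
open Quaternion

namespace Quaternion

variable {R : Type*} [CommRing R]

theorem eq_zero_iff_re_eq_zero_and_im_eq_zero (q : ℍ[R]) : q = 0 ↔ q.re = 0 ∧ q.im = 0 := by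
  constructor
  · rintro rfl
    simp
  · rintro ⟨hre, him⟩
    rw [← re_add_im q, hre, him, coe_zero, add_zero]

theorem re_mul_sub_mul_star (a x : ℍ[R]) : (a * x - x * star a).re = 2 * (a.im * x).re := by
  simp only [re_sub, re_mul, re_star, imI_star, imJ_star, imK_star, re_im, imI_im, imJ_im, imK_im]
  ring

theorem im_mul_sub_mul_star (a x : ℍ[R]) : (a * x - x * star a).im = (2 * x.re) • a.im := by
  ext <;>
  simp only [im_sub, re_sub, imI_sub, imJ_sub, imK_sub, re_im, imI_im, imJ_im, imK_im,
    imI_mul, imJ_mul, imK_mul, re_star, imI_star, imJ_star, imK_star, re_smul, imI_smul,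
    imJ_smul, imK_smul, smul_eq_mul] <;>
  ring

end Quaternion

theorem homogeneous_sylvester_case_b_eq_conj_a (a : ℍ[ℝ]) (ha : a.im ≠ 0)
    (x : ℍ[ℝ]) :
    a * x = x * star a ↔ x.re = 0 ∧ (a.im * x).re = 0 := by
  rw [← sub_eq_zero, eq_zero_iff_re_eq_zero_and_im_eq_zero, re_mul_sub_mul_star,
    im_mul_sub_mul_star, smul_eq_zero_iff_left ha]
  simp only [mul_eq_zero, two_ne_zero, false_or, and_comm]
end

section
/- Let a and b be nonreal quaternions with Re a = Re b and ‖a‖ = ‖b‖, and let c be a nonzero quaternion with a*c = c*(star b). Then a quaternion x satisfies a*x − x*b = c if and only if there exists a quaternion q such that x = (4‖Im a‖²)⁻¹ • ((Im a) * (q − c)) + (4‖Im b‖²)⁻¹ • ((q + c) * (Im b)). -/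
/-!
Writing `α = Im a`, `β = Im b` and `N = ‖α‖² = ‖β‖²`, we have `α² = β² = -N`, the equation
reduces to `α x - x β = c`, and the compatibility condition `a c = c b̄` becomes `α c = -c β`.
For a solution `x`, the quaternion `q = -(α x + x β)` gives `α (q - c) = (q + c) β = 2N x`;
conversely, for any `q` the quaternion `y = α (q - c) + (q + c) β` satisfies
`α y - y β = 4N c`, using `α c β = -c β² = N c`.
-/

open Quaternion

section Sylvester

variable {K R : Type*} [CommRing K] [Ring R] [Algebra K R] {α β c : R} {N : K}

theorem mul_self_mul_of_mul_self_eq (hα : α * α = -algebraMap K R N) (z : R) :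
    α * α * z = -N • z := by
  rw [hα, neg_mul, ← Algebra.smul_def, neg_smul]

theorem mul_mul_self_of_mul_self_eq (hβ : β * β = -algebraMap K R N) (z : R) :
    z * (β * β) = -N • z := by
  rw [hβ, mul_neg, ← Algebra.commutes, ← Algebra.smul_def, neg_smul]

theorem mul_sub_mul_eq_smul_of_mul_self_eq (hα : α * α = -algebraMap K R N)
    (hβ : β * β = -algebraMap K R N) (hαc : α * c = -(c * β)) (q : R) :
    α * (α * (q - c) + (q + c) * β) - (α * (q - c) + (q + c) * β) * β = (4 * N) • c := by
  calc _ = α * α * (q - c) - (q + c) * (β * β) + 2 • (α * c * β) := by noncomm_ring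
    _ = α * α * (q - c) - (q + c) * (β * β) - 2 • (c * (β * β)) := by rw [hαc]; noncomm_ring
    _ = (4 * N) • c := by
        rw [mul_self_mul_of_mul_self_eq hα, mul_mul_self_of_mul_self_eq hβ,
          mul_mul_self_of_mul_self_eq hβ]
        module

theorem smul_eq_of_mul_sub_mul_eq (hα : α * α = -algebraMap K R N)
    (hβ : β * β = -algebraMap K R N) {x : R} (hx : α * x - x * β = c) :
    α * (-(α * x + x * β) - c) + (-(α * x + x * β) + c) * β = (4 * N) • x := by
  calc _ = -(2 • (α * α * x)) - 2 • (x * (β * β)) := by rw [← hx]; noncomm_ring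
    _ = (4 * N) • x := by
        rw [mul_self_mul_of_mul_self_eq hα, mul_mul_self_of_mul_self_eq hβ]
        module

end Sylvester

theorem mul_sub_mul_eq_iff_of_mul_self_eq {K R : Type*} [Field K] [Ring R] [Algebra K R]
    {α β c : R} {N : K} (h4N : (4 * N : K) ≠ 0) (hα : α * α = -algebraMap K R N)
    (hβ : β * β = -algebraMap K R N) (hαc : α * c = -(c * β)) (x : R) :
    α * x - x * β = c ↔ ∃ q : R, x = (4 * N)⁻¹ • (α * (q - c)) + (4 * N)⁻¹ • ((q + c) * β) := by
  simp only [← smul_add]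
  constructor
  · intro hx
    exact ⟨_, by rw [smul_eq_of_mul_sub_mul_eq hα hβ hx, inv_smul_smul₀ h4N]⟩
  · rintro ⟨q, rfl⟩
    rw [mul_smul_comm, smul_mul_assoc, ← smul_sub,
      mul_sub_mul_eq_smul_of_mul_self_eq hα hβ hαc q, inv_smul_smul₀ h4N]

namespace Quaternion

variable {R : Type*} [CommRing R]

theorem normSq_im (a : ℍ[R]) : normSq a.im = normSq a - a.re ^ 2 := by
  simp only [normSq_def', re_im, imI_im, imJ_im, imK_im]
  ring

theorem im_mul_im_self (a : ℍ[R]) : a.im * a.im = -algebraMap R ℍ[R] (normSq a.im) := by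
  rw [← sq, im_sq, algebraMap_def]

theorem mul_sub_mul_eq_im_mul_sub_mul_im {a b : ℍ[R]} (hre : a.re = b.re) (x : ℍ[R]) :
    a * x - x * b = a.im * x - x * b.im := by
  conv_lhs => rw [← re_add_im a, ← re_add_im b, hre, add_mul, mul_add, coe_commutes]
  abel

theorem mul_eq_mul_star_iff {a b : ℍ[R]} (hre : a.re = b.re) (c : ℍ[R]) :
    a * c = c * star b ↔ a.im * c = -(c * b.im) := by
  rw [← sub_eq_zero, mul_sub_mul_eq_im_mul_sub_mul_im (b := star b) (by rw [re_star, hre]),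
    im_star, mul_neg, sub_neg_eq_add, eq_neg_iff_add_eq_zero]

theorem sq_norm_eq_normSq (a : ℍ[ℝ]) : ‖a‖ ^ 2 = normSq a := by
  rw [sq, normSq_eq_norm_mul_self]

end Quaternion

theorem inhomogeneous_sylvester_general_solution_general (a b c : ℍ[ℝ])
    (ha : a.im ≠ 0)
    (hre : a.re = b.re) (hnorm : ‖a‖ = ‖b‖)
    (hsolv : a * c = c * star b) (x : ℍ[ℝ]) :
    a * x - x * b = c ↔
      ∃ q : ℍ[ℝ], x = (4 * ‖a.im‖ ^ 2)⁻¹ • (a.im * (q - c)) +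
        (4 * ‖b.im‖ ^ 2)⁻¹ • ((q + c) * b.im) := by
  have hN : normSq b.im = normSq a.im := by
    rw [normSq_im, normSq_im, hre, ← sq_norm_eq_normSq, ← sq_norm_eq_normSq, hnorm]
  have h4N : (4 * normSq a.im : ℝ) ≠ 0 := mul_ne_zero four_ne_zero (normSq_ne_zero.2 ha)
  rw [sq_norm_eq_normSq, sq_norm_eq_normSq, hN,
    mul_sub_mul_eq_im_mul_sub_mul_im hre]
  exact mul_sub_mul_eq_iff_of_mul_self_eq h4N (im_mul_im_self a) (hN ▸ im_mul_im_self b)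
    ((mul_eq_mul_star_iff hre c).1 hsolv) x

theorem inhomogeneous_sylvester_general_solution (a b c : ℍ[ℝ])
    (ha : a.im ≠ 0) (hb : b.im ≠ 0)
    (hre : a.re = b.re) (hnorm : ‖a‖ = ‖b‖)
    (hc : c ≠ 0) (hsolv : a * c = c * star b) (x : ℍ[ℝ]) :
    a * x - x * b = c ↔
      ∃ q : ℍ[ℝ], x = (4 * ‖a.im‖ ^ 2)⁻¹ • (a.im * (q - c)) +
        (4 * ‖b.im‖ ^ 2)⁻¹ • ((q + c) * b.im) :=
  inhomogeneous_sylvester_general_solution_general a b c ha hre hnorm hsolv x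
end
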